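/- Let a < t₁, h = t₁ - a, t_{1/2} = (a+t₁)/2, and β⁻ > 0. Let φ₀ and φ_{1/2} be the standard quadratic Lagrange basis functions on [a,t₁] at the nodes a and t_{1/2}, so φ₀'(x) = (2/h²)(2x - t_{1/2} - t₁) and φ_{1/2}'(x) = -(4/h²)(2x - a - t₁). Let e be continuously differentiable on [a,t₁] with e(a) = e(t₁) = 0 and ∫_a^{t₁} β⁻ e' φ_{1/2}' dx = 0. Then ∫_a^{t₁} β⁻ e' φ₀' dx = 0. -/

import Mathlib

/-!
Writing `h = t₁ - a`, the basis derivatives satisfy `φ₀' = -½ φ_{1/2}' - 1/h`. Hence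
`∫ β⁻ e' φ₀' = -½ ∫ β⁻ e' φ_{1/2}' - (β⁻/h) ∫ e'`, and both integrals vanish: the first by
orthogonality, the second by the fundamental theorem of calculus since `e(a) = e(t₁)`.
-/

open Set intervalIntegral

theorem integral_eq_sub_of_hasDerivWithinAt_Icc {f f' : ℝ → ℝ} {a b : ℝ} (hab : a ≤ b)
    (hf : ∀ x ∈ Icc a b, HasDerivWithinAt f (f' x) (Icc a b) x)
    (hf' : ContinuousOn f' (Icc a b)) :
    ∫ x in a..b, f' x = f b - f a :=
  integral_eq_sub_of_hasDeriv_right_of_le hab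
    (fun x hx => (hf x hx).continuousWithinAt)
    (fun x hx => ((hf x (Ioo_subset_Icc_self hx)).hasDerivAt
      (Icc_mem_nhds hx.1 hx.2)).hasDerivWithinAt)
    (hf'.intervalIntegrable_of_Icc hab)

theorem quadBasis_endpoint_deriv_eq {a t1 : ℝ} (hne : t1 - a ≠ 0) (x : ℝ) :
    (2 / (t1 - a) ^ 2) * (2 * x - (a + t1) / 2 - t1)
      = -(1 / 2) * (-(4 / (t1 - a) ^ 2) * (2 * x - a - t1)) - 1 / (t1 - a) := by
  field_simp
  ring

theorem stmt_16_general (a t1 βm : ℝ) (h : a < t1)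
    (e e' : ℝ → ℝ)
    (he : ∀ x ∈ Icc a t1, HasDerivWithinAt e (e' x) (Icc a t1) x)
    (he'c : ContinuousOn e' (Icc a t1))
    (hea : e a = 0) (het : e t1 = 0)
    (horth : (∫ x in a..t1,
        βm * e' x * (-(4 / (t1 - a) ^ 2) * (2 * x - a - t1))) = 0) :
    (∫ x in a..t1,
        βm * e' x * ((2 / (t1 - a) ^ 2) * (2 * x - (a + t1) / 2 - t1))) = 0 := by
  have hne : t1 - a ≠ 0 := sub_ne_zero.mpr h.ne'
  have hFTC : ∫ x in a..t1, e' x = 0 := by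
    rw [integral_eq_sub_of_hasDerivWithinAt_Icc h.le he he'c, het, hea, sub_zero]
  have hint : IntervalIntegrable e' MeasureTheory.volume a t1 :=
    he'c.intervalIntegrable_of_Icc h.le
  have hint_orth : IntervalIntegrable
      (fun x => βm * e' x * (-(4 / (t1 - a) ^ 2) * (2 * x - a - t1)))
      MeasureTheory.volume a t1 :=
    (hint.const_mul βm).mul_continuousOn (by fun_prop)
  calc (∫ x in a..t1, βm * e' x * ((2 / (t1 - a) ^ 2) * (2 * x - (a + t1) / 2 - t1)))
      = ∫ x in a..t1, (-(1 / 2) * (βm * e' x * (-(4 / (t1 - a) ^ 2) * (2 * x - a - t1)))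
          + -(βm / (t1 - a)) * e' x) := by
        refine integral_congr fun x _ => ?_
        rw [quadBasis_endpoint_deriv_eq hne]
        ring
    _ = -(1 / 2) * (∫ x in a..t1, βm * e' x * (-(4 / (t1 - a) ^ 2) * (2 * x - a - t1)))
          + -(βm / (t1 - a)) * ∫ x in a..t1, e' x := by
        rw [integral_add (hint_orth.const_mul _) (hint.const_mul _), integral_const_mul,
          integral_const_mul]
    _ = 0 := by rw [horth, hFTC]; ring

/-- Endpoint flux exactness (case q = 0): if `e` is `C¹` on `[a,t₁]` with
`e a = e t₁ = 0` and is orthogonal to the midpoint quadratic basis derivative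
`φ_{1/2}' = -(4/h²)(2x - a - t₁)`, then `∫ β⁻ e' φ₀' = 0`, where
`φ₀' = (2/h²)(2x - t_{1/2} - t₁)`. -/
theorem stmt_16 (a t1 βm : ℝ) (h : a < t1) (hβ : 0 < βm)
    (e e' : ℝ → ℝ)
    (he : ∀ x ∈ Icc a t1, HasDerivWithinAt e (e' x) (Icc a t1) x)
    (he'c : ContinuousOn e' (Icc a t1))
    (hea : e a = 0) (het : e t1 = 0)
    (horth : (∫ x in a..t1,
        βm * e' x * (-(4 / (t1 - a) ^ 2) * (2 * x - a - t1))) = 0) :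
    (∫ x in a..t1,
        βm * e' x * ((2 / (t1 - a) ^ 2) * (2 * x - (a + t1) / 2 - t1))) = 0 :=
  stmt_16_general a t1 βm h e e' he he'c hea het horth
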